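/- arXiv:1304.4773 — 2 statements merged into one kernel-verified Lean document; each statement's English description precedes it below -/
import Mathlib

section
/- Let ρ: ℝ → ℝ be convex, symmetric, with ρ(0) = 0 and ρ(x) > 0 for x ≠ 0, let λ > 0 and 1 ≤ h ≤ n. Let Z = (X, y) be any sample of n observations with p ≥ 1 predictors. Then for every constant M > 0 there exists a corrupted sample Z̃ obtained from Z by replacing m = n − h + 1 observations by a common point z(γ, τ) = ((τ, 0, …, 0)', γτ) with suitable γ, τ > 0, such that every minimizer β̂ of Q_{Z̃}(β) = Σ_{i=1}^{h} (ρ(ỹ − X̃β))_{i:n} + h λ Σ_{j=1}^{p} |β_j| satisfies ‖β̂‖₂ > M. Consequently, the breakdown point of this estimator is at most (n − h + 1)/n. -/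
open Finset

/-- The `i`-th order statistic of the vector `r`, i.e. the `i`-th entry after sorting
the entries of `r` in nondecreasing order. -/
noncomputable def orderStat {n : ℕ} (r : Fin n → ℝ) (i : Fin n) : ℝ :=
  r (Tuple.sort r i)

/-- The sum of the `h` smallest entries (order statistics) of the vector `r`. -/
noncomputable def trimmedSum {n : ℕ} (h : ℕ) (r : Fin n → ℝ) : ℝ :=
  ∑ i ∈ Finset.univ.filter (fun i : Fin n => (i : ℕ) < h), orderStat r i

/-- The L¹ norm of a coefficient vector `β ∈ ℝ^p`. -/
noncomputable def l1norm {p : ℕ} (β : Fin p → ℝ) : ℝ := ∑ j, |β j|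

/-- The Euclidean (L²) norm of a coefficient vector `β ∈ ℝ^p`. -/
noncomputable def euclNorm {p : ℕ} (β : Fin p → ℝ) : ℝ := Real.sqrt (∑ j, β j ^ 2)

/-- `Corrupt m X X' y y'` : the sample `(X', y')` is obtained from the sample `(X, y)` by
replacing (at most) `m` of the `n` observations `(xᵢ', yᵢ)` by arbitrary values. -/
def Corrupt {n p : ℕ} (m : ℕ) (X X' : Fin n → Fin p → ℝ) (y y' : Fin n → ℝ) : Prop :=
  ∃ s : Finset (Fin n), s.card ≤ m ∧ ∀ i ∉ s, (∀ j, X' i j = X i j) ∧ y' i = y i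

/-- The trimmed penalized objective function
`Q_Z̃(β) = Σ_{i=1}^{h} (ρ(ỹ − X̃β))_{i:n} + h λ Σ_j |β_j|` with loss `ρ`. -/
noncomputable def QGen {n p : ℕ} (ρ : ℝ → ℝ) (lam : ℝ) (h : ℕ)
    (X : Fin n → Fin p → ℝ) (y : Fin n → ℝ) (β : Fin p → ℝ) : ℝ :=
  trimmedSum h (fun i => ρ (y i - ∑ j, X i j * β j)) + (h : ℝ) * lam * l1norm β

/-- The design matrix obtained from `X` by replacing the last `n − h + 1` observations
(indices `i ≥ h − 1`) by the predictor vector `x(τ) = (τ, 0, …, 0)'`. -/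
noncomputable def contamX {n p : ℕ} (h : ℕ) (X : Fin n → Fin p → ℝ) (τ : ℝ) :
    Fin n → Fin p → ℝ :=
  fun i j => if (i : ℕ) < h - 1 then X i j else if (j : ℕ) = 0 then τ else 0

/-- The response vector obtained from `y` by replacing the last `n − h + 1` observations
(indices `i ≥ h − 1`) by the response `y(γ, τ) = γτ`. -/
noncomputable def contamY {n : ℕ} (h : ℕ) (y : Fin n → ℝ) (γ τ : ℝ) : Fin n → ℝ :=
  fun i => if (i : ℕ) < h - 1 then y i else γ * τ

/-- `BreaksDown est X y m` : the supremum of `‖est(Z̃)‖₂` over all samples `Z̃` obtained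
from `Z = (X, y)` by replacing `m` observations by arbitrary values is infinite. -/
def BreaksDown {n p : ℕ} (est : (Fin n → Fin p → ℝ) → (Fin n → ℝ) → Fin p → ℝ)
    (X : Fin n → Fin p → ℝ) (y : Fin n → ℝ) (m : ℕ) : Prop :=
  ∀ M : ℝ, ∃ X' y', Corrupt m X X' y y' ∧ M < euclNorm (est X' y')

/-- The replacement finite-sample breakdown point
`ε*(est; Z) = min{ m/n : sup_{Z̃} ‖est(Z̃)‖₂ = ∞ }`. -/
noncomputable def breakdownPoint {n p : ℕ}
    (est : (Fin n → Fin p → ℝ) → (Fin n → ℝ) → Fin p → ℝ)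
    (X : Fin n → Fin p → ℝ) (y : Fin n → ℝ) : ℝ :=
  ((sInf {m : ℕ | BreaksDown est X y m} : ℕ) : ℝ) / n

/-! Put `γ = M + 1`. The coefficient vector `γ e₁` fits all `n − h + 1` planted points exactly,
so its objective value is bounded by a constant `B` independent of `τ`. If `‖β‖₂ ≤ M`, then
`β₁ ≤ γ − 1`, so every planted point has residual `τ (γ − β₁) ≥ τ` and, by convexity and
`ρ 0 = 0`, loss at least `τ ρ 1`. Only `h − 1` observations are clean, so one planted loss is
among the `h` smallest, and the objective at `β` is at least `τ ρ 1 > B` once `τ` is large. -/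

lemma ConvexOn.mul_le_map_smul_of_one_le {E : Type*} [AddCommGroup E] [Module ℝ E]
    {s : Set E} {f : E → ℝ} (hf : ConvexOn ℝ s f) (h0 : (0 : E) ∈ s) (hf0 : f 0 ≤ 0)
    {x : E} {t : ℝ} (ht : 1 ≤ t) (htx : t • x ∈ s) : t * f x ≤ f (t • x) := by
  have ht0 : 0 < t := one_pos.trans_le ht
  have hconv := hf.2 htx h0 (inv_nonneg.2 ht0.le) (sub_nonneg.2 (inv_le_one_of_one_le₀ ht))
    (add_sub_cancel _ _)
  rw [smul_zero, add_zero, inv_smul_smul₀ ht0.ne', smul_eq_mul, smul_eq_mul] at hconv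
  have hrest : (1 - t⁻¹) * f 0 ≤ 0 :=
    mul_nonpos_of_nonneg_of_nonpos (sub_nonneg.2 (inv_le_one_of_one_le₀ ht)) hf0
  calc t * f x ≤ t * (t⁻¹ * f (t • x)) := by gcongr; linarith
    _ = f (t • x) := by rw [mul_inv_cancel_left₀ ht0.ne']

lemma abs_le_euclNorm {p : ℕ} (β : Fin p → ℝ) (j : Fin p) : |β j| ≤ euclNorm β :=
  Real.abs_le_sqrt (single_le_sum (fun k _ => sq_nonneg (β k)) (mem_univ j))

section TrimmedSum

variable {n h : ℕ} {r : Fin n → ℝ}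

lemma trimmedSum_eq_sum_map (h : ℕ) (r : Fin n → ℝ) :
    trimmedSum h r =
      ∑ i ∈ ({i : Fin n | (i : ℕ) < h} : Finset (Fin n)).map (Tuple.sort r).toEmbedding, r i := by
  simp [trimmedSum, orderStat]

lemma trimmedSum_le_sum (hr : 0 ≤ r) : trimmedSum h r ≤ ∑ i, r i := by
  rw [trimmedSum_eq_sum_map]
  exact sum_le_sum_of_subset_of_nonneg (subset_univ _) fun i _ _ => hr i

lemma le_trimmedSum (hhn : h ≤ n) (hr : 0 ≤ r) {c : ℝ} (hc : #{i | r i < c} < h) :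
    c ≤ trimmedSum h r := by
  rw [trimmedSum_eq_sum_map]
  set S := ({i : Fin n | (i : ℕ) < h} : Finset (Fin n)).map (Tuple.sort r).toEmbedding
  have hS : #S = h := by rw [card_map, Fin.card_filter_val_lt, min_eq_right hhn]
  obtain ⟨i, hiS, hic⟩ := not_subset.1 fun hsub => (card_le_card hsub).not_gt (hS ▸ hc)
  calc c ≤ r i := by simpa using hic
    _ ≤ ∑ i ∈ S, r i := single_le_sum (fun k _ => hr k) hiS

end TrimmedSum

section Contamination

variable {n p : ℕ} (h : ℕ) (X : Fin n → Fin p → ℝ) (y : Fin n → ℝ) (γ τ : ℝ)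

lemma corrupt_contam : Corrupt (n - h + 1) X (contamX h X τ) y (contamY h y γ τ) := by
  refine ⟨({i | ¬ (i : ℕ) < h - 1} : Finset (Fin n)), ?_, fun i hi => ?_⟩
  · rw [filter_not, card_sdiff_of_subset (filter_subset _ _), Fin.card_filter_val_lt, card_univ,
      Fintype.card_fin]
    omega
  · simp only [mem_filter, mem_univ, true_and, not_not] at hi
    simp [contamX, contamY, hi]

variable {h X y γ τ}

lemma contam_residual_of_lt (β : Fin p → ℝ) {i : Fin n} (hi : (i : ℕ) < h - 1) :
    contamY h y γ τ i - ∑ j, contamX h X τ i j * β j = y i - ∑ j, X i j * β j := by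
  simp [contamX, contamY, hi]

lemma contam_residual_of_le (hp : 0 < p) (β : Fin p → ℝ) {i : Fin n} (hi : h - 1 ≤ (i : ℕ)) :
    contamY h y γ τ i - ∑ j, contamX h X τ i j * β j = τ * (γ - β ⟨0, hp⟩) := by
  have hrow : ∀ j : Fin p, contamX h X τ i j * β j = if j = ⟨0, hp⟩ then τ * β j else 0 := by
    intro j
    simp [contamX, hi.not_gt, Fin.ext_iff]
  simp only [contamY, hi.not_gt, if_false, hrow, sum_ite_eq', mem_univ, if_true]
  ring

end Contamination

section Objective

variable {n p h : ℕ} {ρ : ℝ → ℝ} {lam γ τ : ℝ} {X : Fin n → Fin p → ℝ} {y : Fin n → ℝ}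

lemma QGen_contam_le (hp : 0 < p) (hρ : 0 ≤ ρ) (hzero : ρ 0 = 0) {β : Fin p → ℝ}
    (hβ : β ⟨0, hp⟩ = γ) :
    QGen ρ lam h (contamX h X τ) (contamY h y γ τ) β ≤
      ∑ i, ρ (y i - ∑ j, X i j * β j) + h * lam * l1norm β := by
  refine add_le_add_left ((trimmedSum_le_sum fun i => hρ _).trans (sum_le_sum fun i _ => ?_)) _
  rcases lt_or_ge (i : ℕ) (h - 1) with hi | hi
  · rw [contam_residual_of_lt β hi]
  · rw [contam_residual_of_le hp β hi, hβ, sub_self, mul_zero, hzero]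
    exact hρ _

lemma le_QGen_contam (hp : 0 < p) (hh1 : 1 ≤ h) (hhn : h ≤ n) (hρ : 0 ≤ ρ)
    (hconv : ConvexOn ℝ Set.univ ρ) (hzero : ρ 0 = 0) (hlam : 0 ≤ lam) (hτ : 1 ≤ τ)
    {β : Fin p → ℝ} (hβ : β ⟨0, hp⟩ ≤ γ - 1) :
    τ * ρ 1 ≤ QGen ρ lam h (contamX h X τ) (contamY h y γ τ) β := by
  set r : Fin n → ℝ := fun i => ρ (contamY h y γ τ i - ∑ j, contamX h X τ i j * β j)
  have hbig : ∀ i : Fin n, h - 1 ≤ (i : ℕ) → τ * ρ 1 ≤ r i := by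
    intro i hi
    have hb : τ ≤ τ * (γ - β ⟨0, hp⟩) := le_mul_of_one_le_right (by linarith) (by linarith)
    calc τ * ρ 1 ≤ τ * (γ - β ⟨0, hp⟩) * ρ 1 := by gcongr; exact hρ 1
      _ ≤ r i := by
        simpa [r, contam_residual_of_le hp β hi] using
          hconv.mul_le_map_smul_of_one_le (Set.mem_univ 0) hzero.le (x := 1) (hτ.trans hb)
            (Set.mem_univ _)
  have hfew : #{i | r i < τ * ρ 1} < h :=
    calc #{i | r i < τ * ρ 1} ≤ #{i : Fin n | (i : ℕ) < h - 1} :=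
          card_le_card fun i hi => by
            simp only [mem_filter, mem_univ, true_and] at hi ⊢
            by_contra! hle
            exact (hbig i hle).not_gt hi
      _ ≤ h - 1 := Fin.card_filter_val_lt.trans_le (min_le_right _ _)
      _ < h := by omega
  have hpen : 0 ≤ (h : ℝ) * lam * l1norm β := by unfold l1norm; positivity
  have := le_trimmedSum hhn (fun i => hρ _) hfew
  unfold QGen
  linarith

theorem exists_contam_forall_minimizer_lt_euclNorm (hp : 0 < p) (hh1 : 1 ≤ h) (hhn : h ≤ n)
    (hρ : 0 ≤ ρ) (hconv : ConvexOn ℝ Set.univ ρ) (hzero : ρ 0 = 0) (hρ1 : 0 < ρ 1)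
    (hlam : 0 ≤ lam) (X : Fin n → Fin p → ℝ) (y : Fin n → ℝ) {M : ℝ} (hM : 0 < M) :
    ∃ γ τ : ℝ, 0 < γ ∧ 0 < τ ∧ ∀ β : Fin p → ℝ,
      (∀ β', QGen ρ lam h (contamX h X τ) (contamY h y γ τ) β ≤
        QGen ρ lam h (contamX h X τ) (contamY h y γ τ) β') → M < euclNorm β := by
  set γ := M + 1
  set βfit : Fin p → ℝ := Pi.single ⟨0, hp⟩ γ
  set B := ∑ i, ρ (y i - ∑ j, X i j * βfit j) + h * lam * l1norm βfit
  set τ := max 1 ((B + 1) / ρ 1)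
  have hτ1 : 1 ≤ τ := le_max_left _ _
  have hτ : B + 1 ≤ τ * ρ 1 := (div_le_iff₀ hρ1).1 (le_max_right _ _)
  refine ⟨γ, τ, by positivity, one_pos.trans_le hτ1, fun β hmin => ?_⟩
  by_contra! hβ
  have hβ0 : β ⟨0, hp⟩ ≤ γ - 1 := by
    linarith [le_abs_self (β ⟨0, hp⟩), abs_le_euclNorm β ⟨0, hp⟩]
  have hfit : QGen ρ lam h (contamX h X τ) (contamY h y γ τ) βfit ≤ B :=
    QGen_contam_le hp hρ hzero (Pi.single_eq_same _ _)
  have hlarge := le_QGen_contam hp hh1 hhn hρ hconv hzero hlam hτ1 hβ0 (X := X) (y := y)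
  linarith [hmin βfit]

end Objective

lemma breakdownPoint_le_of_breaksDown {n p m : ℕ}
    {est : (Fin n → Fin p → ℝ) → (Fin n → ℝ) → Fin p → ℝ} {X : Fin n → Fin p → ℝ}
    {y : Fin n → ℝ} (hm : BreaksDown est X y m) : breakdownPoint est X y ≤ m / n :=
  div_le_div_of_nonneg_right (Nat.cast_le.2 (Nat.sInf_le hm)) n.cast_nonneg

theorem trimmed_penalized_breakdown_above_general
    {n p h : ℕ} (hp : 1 ≤ p) (hh1 : 1 ≤ h) (hhn : h ≤ n)
    (ρ : ℝ → ℝ) (hconv : ConvexOn ℝ Set.univ ρ)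
    (hzero : ρ 0 = 0) (hpos : ∀ x : ℝ, x ≠ 0 → 0 < ρ x)
    (lam : ℝ) (hlam : 0 < lam)
    (X : Fin n → Fin p → ℝ) (y : Fin n → ℝ) :
    (∀ M : ℝ, 0 < M → ∃ γ τ : ℝ, 0 < γ ∧ 0 < τ ∧
      Corrupt (n - h + 1) X (contamX h X τ) y (contamY h y γ τ) ∧
      ∀ β : Fin p → ℝ,
        (∀ β' : Fin p → ℝ,
          QGen ρ lam h (contamX h X τ) (contamY h y γ τ) β ≤
            QGen ρ lam h (contamX h X τ) (contamY h y γ τ) β') →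
        M < euclNorm β) ∧
    (∀ est : (Fin n → Fin p → ℝ) → (Fin n → ℝ) → Fin p → ℝ,
      (∀ (X₀ : Fin n → Fin p → ℝ) (y₀ : Fin n → ℝ) (β : Fin p → ℝ),
        QGen ρ lam h X₀ y₀ (est X₀ y₀) ≤ QGen ρ lam h X₀ y₀ β) →
      breakdownPoint est X y ≤ ((n : ℝ) - h + 1) / n) := by
  have hρ : 0 ≤ ρ := fun x =>
    (eq_or_ne x 0).elim (fun hx => hx ▸ hzero.ge) (fun hx => (hpos x hx).le)
  have hunbounded : ∀ M : ℝ, 0 < M → ∃ γ τ : ℝ, 0 < γ ∧ 0 < τ ∧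
      Corrupt (n - h + 1) X (contamX h X τ) y (contamY h y γ τ) ∧ ∀ β : Fin p → ℝ,
        (∀ β', QGen ρ lam h (contamX h X τ) (contamY h y γ τ) β ≤
          QGen ρ lam h (contamX h X τ) (contamY h y γ τ) β') → M < euclNorm β := by
    intro M hM
    obtain ⟨γ, τ, hγ, hτ, hmin⟩ := exists_contam_forall_minimizer_lt_euclNorm hp hh1 hhn hρ
      hconv hzero (hpos 1 one_ne_zero) hlam.le X y hM
    exact ⟨γ, τ, hγ, hτ, corrupt_contam h X y γ τ, hmin⟩
  refine ⟨hunbounded, fun est hest => ?_⟩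
  have hbreaks : BreaksDown est X y (n - h + 1) := fun M => by
    obtain ⟨γ, τ, -, -, hcorrupt, hmin⟩ := hunbounded (max M 1) (by positivity)
    exact ⟨_, _, hcorrupt, (le_max_left _ _).trans_lt (hmin _ (hest _ _))⟩
  simpa [Nat.cast_sub hhn] using breakdownPoint_le_of_breaksDown hbreaks

/-- Upper-bound half of Theorem 1: for every bound `M > 0` there are `γ, τ > 0` such that for
the sample obtained from `Z = (X, y)` by replacing the last `m = n − h + 1` observations by
the common point `z(γ, τ) = ((τ, 0, …, 0)', γτ)`, every minimizer of the trimmed penalized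
objective has Euclidean norm larger than `M`. Consequently, for any estimator that always
picks a minimizer, the breakdown point is at most `(n − h + 1)/n`. -/
theorem trimmed_penalized_breakdown_above
    {n p h : ℕ} (hp : 1 ≤ p) (hh1 : 1 ≤ h) (hhn : h ≤ n)
    (ρ : ℝ → ℝ) (hconv : ConvexOn ℝ Set.univ ρ) (hsym : ∀ x : ℝ, ρ (-x) = ρ x)
    (hzero : ρ 0 = 0) (hpos : ∀ x : ℝ, x ≠ 0 → 0 < ρ x)
    (lam : ℝ) (hlam : 0 < lam)
    (X : Fin n → Fin p → ℝ) (y : Fin n → ℝ) :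
    (∀ M : ℝ, 0 < M → ∃ γ τ : ℝ, 0 < γ ∧ 0 < τ ∧
      Corrupt (n - h + 1) X (contamX h X τ) y (contamY h y γ τ) ∧
      ∀ β : Fin p → ℝ,
        (∀ β' : Fin p → ℝ,
          QGen ρ lam h (contamX h X τ) (contamY h y γ τ) β ≤
            QGen ρ lam h (contamX h X τ) (contamY h y γ τ) β') →
        M < euclNorm β) ∧
    (∀ est : (Fin n → Fin p → ℝ) → (Fin n → ℝ) → Fin p → ℝ,
      (∀ (X₀ : Fin n → Fin p → ℝ) (y₀ : Fin n → ℝ) (β : Fin p → ℝ),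
        QGen ρ lam h X₀ y₀ (est X₀ y₀) ≤ QGen ρ lam h X₀ y₀ β) →
      breakdownPoint est X y ≤ ((n : ℝ) - h + 1) / n) :=
  trimmed_penalized_breakdown_above_general hp hh1 hhn ρ hconv hzero hpos lam hlam X y
end

section
/- Fix λ > 0, a sample Z = (X, y) with X ∈ ℝ^{n×p} and y ∈ ℝ^n, and 1 ≤ h ≤ n. Then the sparse LTS objective function f(β) = Σ_{i=1}^{h} (r²(β))_{i:n} + h λ Σ_{j=1}^{p} |β_j|, where r²(β) is the vector of squared residuals (y_i − x_i'β)², attains its minimum over ℝ^p: there exists β* ∈ ℝ^p with f(β*) ≤ f(β) for all β ∈ ℝ^p. -/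
/-! The sum of the `h` smallest entries of `r` is the minimum, over `h`-element index sets `s`,
of `∑ i ∈ s, r i`, hence continuous in `r`. The penalty bounds `f β` below by `h λ ‖β‖`, so `f` is
a continuous function tending to `+∞` along the cocompact filter of `ℝ^p`, and such a function
attains its minimum. -/

open Finset

/-- The sparse LTS objective function
`f(β) = Σ_{i=1}^{h} (r²(β))_{i:n} + h λ Σ_j |β_j|`. -/
noncomputable def QSparseLTS {n p : ℕ} (lam : ℝ) (h : ℕ)
    (X : Fin n → Fin p → ℝ) (y : Fin n → ℝ) (β : Fin p → ℝ) : ℝ :=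
  trimmedSum h (fun i => (y i - ∑ j, X i j * β j) ^ 2) + (h : ℝ) * lam * l1norm β

lemma Fin.val_le_val_of_strictMono {h n : ℕ} {f : Fin h → Fin n} (hf : StrictMono f)
    (i : Fin h) : (i : ℕ) ≤ f i := by
  have hcard := Finset.card_le_card_of_injOn f (s := Iic i) (t := Iic (f i))
    (fun j hj => by simpa using hf.monotone (by simpa using hj)) hf.injective.injOn
  simpa using hcard

lemma Fin.filter_val_lt_eq_map_castLEEmb {h n : ℕ} (hhn : h ≤ n) :
    univ.filter (fun i : Fin n => (i : ℕ) < h) = univ.map (Fin.castLEEmb hhn) := by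
  ext i
  simp only [mem_filter, mem_univ, true_and, mem_map, Fin.castLEEmb_apply]
  exact ⟨fun hi => ⟨⟨i, hi⟩, rfl⟩, by rintro ⟨j, rfl⟩; exact j.2⟩

lemma Fin.sum_filter_val_lt_le_sum_of_monotone {M : Type*} [AddCommMonoid M] [PartialOrder M]
    [IsOrderedAddMonoid M] {n h : ℕ} {g : Fin n → M} (hg : Monotone g)
    {t : Finset (Fin n)} (ht : t.card = h) :
    ∑ i ∈ univ.filter (fun i : Fin n => (i : ℕ) < h), g i ≤ ∑ i ∈ t, g i := by
  have hhn : h ≤ n := ht ▸ (card_le_univ t).trans_eq (Fintype.card_fin n)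
  rw [Fin.filter_val_lt_eq_map_castLEEmb hhn, ← map_orderEmbOfFin_univ t ht, sum_map, sum_map]
  exact sum_le_sum fun i _ =>
    hg (Fin.le_def.mpr (Fin.val_le_val_of_strictMono (t.orderEmbOfFin ht).strictMono i))

lemma trimmedSum_le_sum_s13 {n h : ℕ} (r : Fin n → ℝ) {s : Finset (Fin n)} (hs : s.card = h) :
    trimmedSum h r ≤ ∑ i ∈ s, r i := by
  set σ := Tuple.sort r
  calc trimmedSum h r = ∑ i ∈ univ.filter (fun i : Fin n => (i : ℕ) < h), r (σ i) := rfl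
    _ ≤ ∑ i ∈ s.map σ.symm.toEmbedding, r (σ i) :=
      Fin.sum_filter_val_lt_le_sum_of_monotone (Tuple.monotone_sort r) (by rwa [card_map])
    _ = ∑ i ∈ s, r i := by simp [sum_map]

lemma trimmedSum_eq_sum_map_sort {n : ℕ} (h : ℕ) (r : Fin n → ℝ) :
    trimmedSum h r =
      ∑ i ∈ (univ.filter fun i : Fin n => (i : ℕ) < h).map (Tuple.sort r).toEmbedding, r i := by
  rw [sum_map]
  rfl

lemma trimmedSum_eq_inf' {n h : ℕ} (hhn : h ≤ n) (r : Fin n → ℝ) :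
    trimmedSum h r = (powersetCard h (univ : Finset (Fin n))).inf'
      (powersetCard_nonempty.mpr (by simpa using hhn)) (fun s => ∑ i ∈ s, r i) := by
  refine le_antisymm (le_inf' _ _ fun s hs => trimmedSum_le_sum_s13 r (mem_powersetCard_univ.mp hs)) ?_
  rw [trimmedSum_eq_sum_map_sort]
  refine inf'_le _ (mem_powersetCard_univ.mpr ?_)
  rw [card_map, Fin.filter_val_lt_eq_map_castLEEmb hhn, card_map, card_univ, Fintype.card_fin]

lemma continuous_trimmedSum {n h : ℕ} (hhn : h ≤ n) : Continuous (trimmedSum (n := n) h) := by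
  simp_rw [funext (trimmedSum_eq_inf' hhn)]
  exact Continuous.finset_inf'_apply _ fun s _ => continuous_finsetSum s fun i _ => continuous_apply i

lemma trimmedSum_nonneg {n : ℕ} (h : ℕ) {r : Fin n → ℝ} (hr : 0 ≤ r) : 0 ≤ trimmedSum h r :=
  sum_nonneg fun _ _ => hr _

lemma continuous_l1norm {p : ℕ} : Continuous (l1norm (p := p)) :=
  continuous_finsetSum _ fun j _ => (continuous_apply j).abs

lemma norm_le_l1norm {p : ℕ} (β : Fin p → ℝ) : ‖β‖ ≤ l1norm β :=
  (pi_norm_le_iff_of_nonneg (sum_nonneg fun _ _ => abs_nonneg _)).mpr fun j =>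
    single_le_sum (f := fun k => |β k|) (fun _ _ => abs_nonneg _) (mem_univ j)

lemma continuous_QSparseLTS {n p h : ℕ} (hhn : h ≤ n) (lam : ℝ) (X : Fin n → Fin p → ℝ)
    (y : Fin n → ℝ) : Continuous (QSparseLTS lam h X y) := by
  have hres : Continuous fun β : Fin p → ℝ => fun i => (y i - ∑ j, X i j * β j) ^ 2 := by
    fun_prop
  exact ((continuous_trimmedSum hhn).comp hres).add (continuous_const.mul continuous_l1norm)

open Filter in
lemma tendsto_QSparseLTS_cocompact {n p h : ℕ} (hh1 : 1 ≤ h) {lam : ℝ} (hlam : 0 < lam)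
    (X : Fin n → Fin p → ℝ) (y : Fin n → ℝ) :
    Tendsto (QSparseLTS lam h X y) (cocompact _) atTop := by
  have hc : 0 < (h : ℝ) * lam := mul_pos (by exact_mod_cast hh1) hlam
  refine tendsto_atTop_mono (fun β => ?_) (tendsto_norm_cocompact_atTop.const_mul_atTop hc)
  calc (h : ℝ) * lam * ‖β‖ ≤ (h : ℝ) * lam * l1norm β := by gcongr; exact norm_le_l1norm β
    _ ≤ QSparseLTS lam h X y β :=
      le_add_of_nonneg_left (trimmedSum_nonneg h fun i => sq_nonneg _)

/-- The sparse LTS objective function attains its minimum over `ℝ^p`: there exists `β*`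
with `f(β*) ≤ f(β)` for all `β`. -/
theorem sparseLTS_attains_min
    {n p h : ℕ} (hh1 : 1 ≤ h) (hhn : h ≤ n) (lam : ℝ) (hlam : 0 < lam)
    (X : Fin n → Fin p → ℝ) (y : Fin n → ℝ) :
    ∃ βstar : Fin p → ℝ, ∀ β : Fin p → ℝ,
      QSparseLTS lam h X y βstar ≤ QSparseLTS lam h X y β :=
  (continuous_QSparseLTS hhn lam X y).exists_forall_le (tendsto_QSparseLTS_cocompact hh1 hlam X y)
end
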